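/- Let m and α_1,…,α_m be fixed positive integers with α_1 + ⋯ + α_m even, and let 𝔫_o(α) = #{i ∈ {1,…,m} : α_i is odd}. Then there is a constant C, depending only on m and α_1,…,α_m, such that for every integer n ≥ m and any mutually distinct indices l_1,…,l_m ∈ {1,…,n}, |E[Z_{l_1}^{α_1} ⋯ Z_{l_m}^{α_m}]| ≤ C·n^{−𝔫_o(α)/2}. -/

import Mathlib

open MeasureTheory ProbabilityTheory Finset

noncomputable section

instance permMS (n : ℕ) : MeasurableSpace (Equiv.Perm (Fin n)) := ⊤

/-- The uniform probability measure on the set of all `n!` permutations of `{1,…,n}`. -/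
def permMeasure (n : ℕ) : Measure (Equiv.Perm (Fin n)) :=
  (PMF.uniformOfFintype (Equiv.Perm (Fin n))).toMeasure

/-- The rank `Q_i` of the random permutation, as a real number in `{1,…,n}`. -/
def Qr (n : ℕ) (i : Fin n) (σ : Equiv.Perm (Fin n)) : ℝ := (σ i : ℕ) + 1

/-- The centralized and normalized rank `Z_i = sqrt(12/(n²−1))·(Q_i − (n+1)/2)`. -/
def Zr (n : ℕ) (i : Fin n) (σ : Equiv.Perm (Fin n)) : ℝ :=
  Real.sqrt (12 / ((n : ℝ) ^ 2 - 1)) * (Qr n i σ - ((n : ℝ) + 1) / 2)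

/-!
Since `σ ↦ (σ l_1, …, σ l_m)` pushes the uniform measure on permutations to the uniform measure
on injective tuples, the moment equals `S_α / n(n-1)⋯(n-m+1)`, where `S_β` is the sum of
`∏ z_{q_i}^{β_i}` over injective tuples `q` and `z` is the vector of normalized ranks.
Dropping the constraint that `q_1` differs from the other indices gives
`S_β = (∑_x z_x^{β_1}) S_{β'} - ∑_j S_{β' + β_1 e_j}`. The ranks are symmetric about their mean, so
`∑_x z_x^b = 0` for odd `b`, and `|z_x| ≤ √3`. Each step of the recursion therefore gains a factor
`n` only when `β_1` is even, and merging `β_1` into another exponent removes at most two odd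
exponents; by induction `|S_β| = O(n^{k - ⌈o(β)/2⌉})` with `o(β)` the number of odd exponents.
Dividing by `n(n-1)⋯(n-m+1) ≥ (n/m)^m` leaves `O(n^{-⌈o(α)/2⌉})`.
-/

open Function
open scoped Nat

theorem prod_pow_update_add {κ M : Type*} [Fintype κ] [DecidableEq κ] [CommMonoid M]
    (f : κ → M) (b : κ → ℕ) (j : κ) (a : ℕ) :
    ∏ i, f i ^ update b j (b j + a) i = f j ^ a * ∏ i, f i ^ b i := by
  have : (fun i => f i ^ update b j (b j + a) i) =
      update (fun i => f i ^ b i) j (f j ^ (b j + a)) := by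
    ext i
    rcases eq_or_ne i j with rfl | h <;> simp [*]
  rw [this, prod_update_of_mem (mem_univ j), pow_add, ← mul_prod_erase univ _ (mem_univ j),
    sdiff_singleton_eq_erase, mul_right_comm, mul_comm]

theorem sum_update_add {κ M : Type*} [Fintype κ] [DecidableEq κ] [AddCommMonoid M]
    (b : κ → M) (j : κ) (a : M) : ∑ i, update b j (b j + a) i = ∑ i, b i + a := by
  rw [sum_update_of_mem (mem_univ j), ← add_sum_erase univ _ (mem_univ j),
    sdiff_singleton_eq_erase, add_right_comm]

theorem sum_compl_range_embedding {ι R : Type*} [Fintype ι] [DecidableEq ι] [AddCommGroup R]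
    {k : ℕ} (e : Fin k ↪ ι) (g : ι → R) :
    ∑ x : {x // x ∉ Set.range e}, g x = ∑ x, g x - ∑ j, g (e j) := by
  rw [eq_sub_iff_add_eq', ← Fintype.sum_subtype_add_sum_subtype (· ∈ Set.range e) g]
  congr 1
  convert Fintype.sum_equiv (Equiv.ofInjective e e.injective) _ (fun x => g x) fun _ => rfl
  rfl

def oddCount {k : ℕ} (β : Fin k → ℕ) : ℕ := #{i | Odd (β i)}

theorem oddCount_le {k : ℕ} (β : Fin k → ℕ) : oddCount β ≤ k :=
  (card_filter_le _ _).trans_eq (card_fin k)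

theorem oddCount_eq_tail {k : ℕ} (β : Fin (k + 1) → ℕ) :
    oddCount β = oddCount (Fin.tail β) + if Odd (β 0) then 1 else 0 := by
  rw [oddCount, oddCount, card_filter, card_filter, Fin.sum_univ_succ, add_comm]
  rfl

theorem oddCount_le_update {k : ℕ} (β : Fin k → ℕ) (j : Fin k) (v : ℕ) :
    oddCount β ≤ oddCount (update β j v) + 1 := by
  refine (card_le_card fun i hi => ?_).trans (card_insert_le j _)
  rcases eq_or_ne i j with rfl | hij
  · exact mem_insert_self _ _
  · simpa [hij] using hi

section DistinctMonomialSum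

variable {ι R : Type*} [Fintype ι] [CommRing R]

def distinctMonomialSum (w : ι → R) {k : ℕ} (β : Fin k → ℕ) : R :=
  ∑ q : Fin k ↪ ι, ∏ i, w (q i) ^ β i

theorem distinctMonomialSum_zero (w : ι → R) (β : Fin 0 → ℕ) :
    distinctMonomialSum w β = 1 := by
  simp [distinctMonomialSum]

theorem distinctMonomialSum_succ [DecidableEq ι] (w : ι → R) {k : ℕ}
    (β : Fin (k + 1) → ℕ) :
    distinctMonomialSum w β = (∑ x, w x ^ β 0) * distinctMonomialSum w (Fin.tail β) -
      ∑ j, distinctMonomialSum w (update (Fin.tail β) j (Fin.tail β j + β 0)) := by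
  rw [distinctMonomialSum, ← Equiv.sum_comp (Equiv.embeddingFinSucc k ι).symm, Fintype.sum_sigma]
  simp only [Equiv.coe_embeddingFinSucc_symm, Fin.prod_univ_succ, Fin.cons_zero,
    Fin.cons_succ, ← Finset.sum_mul, sum_compl_range_embedding _ (fun x => w x ^ β 0), sub_mul,
    sum_sub_distrib, Finset.mul_sum, distinctMonomialSum, prod_pow_update_add]
  simp only [Finset.sum_mul]
  congr 1
  exact Finset.sum_comm

theorem abs_sum_pow_le {w : ι → ℝ} {c : ℝ} (hw : ∀ x, |w x| ≤ c) (b : ℕ) :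
    |∑ x, w x ^ b| ≤ Fintype.card ι * c ^ b :=
  calc |∑ x, w x ^ b| ≤ ∑ x, |w x| ^ b := by
        simpa only [abs_pow] using abs_sum_le_sum_abs (fun x => w x ^ b) univ
    _ ≤ ∑ _x : ι, c ^ b := by gcongr; exact hw _
    _ = Fintype.card ι * c ^ b := by simp

theorem abs_distinctMonomialSum_succ_le [DecidableEq ι] (w : ι → ℝ) {k : ℕ}
    (β : Fin (k + 1) → ℕ) :
    |distinctMonomialSum w β| ≤ |∑ x, w x ^ β 0| * |distinctMonomialSum w (Fin.tail β)| +
      ∑ j, |distinctMonomialSum w (update (Fin.tail β) j (Fin.tail β j + β 0))| := by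
  rw [distinctMonomialSum_succ, ← abs_mul]
  refine (abs_sub _ _).trans ?_
  gcongr
  exact abs_sum_le_sum_abs _ _

theorem abs_distinctMonomialSum_le [DecidableEq ι] [Nonempty ι] {w : ι → ℝ} {c : ℝ}
    (hw : ∀ x, |w x| ≤ c) (hodd : ∀ b, Odd b → ∑ x, w x ^ b = 0) {k : ℕ} (β : Fin k → ℕ) :
    |distinctMonomialSum w β| ≤
      c ^ (∑ i, β i) * k ! * (Fintype.card ι : ℝ) ^ (k - (oddCount β + 1) / 2) := by
  have hc : 0 ≤ c := (abs_nonneg _).trans (hw (Classical.arbitrary ι))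
  have hN : (1 : ℝ) ≤ Fintype.card ι := by exact_mod_cast Fintype.card_pos
  induction k with
  | zero => simp [distinctMonomialSum_zero]
  | succ k ih =>
    set M := c ^ (∑ i, β i) * k ! * (Fintype.card ι : ℝ) ^ (k + 1 - (oddCount β + 1) / 2)
      with hM
    have hsum : ∑ i, β i = β 0 + ∑ i, Fin.tail β i := Fin.sum_univ_succ β
    have hodd_tail := oddCount_eq_tail β
    have hodd_le := oddCount_le (Fin.tail β)
    have head_le : |∑ x, w x ^ β 0| * |distinctMonomialSum w (Fin.tail β)| ≤ M := by
      by_cases h0 : Odd (β 0)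
      · rw [hodd _ h0, abs_zero, zero_mul]
        positivity
      · rw [if_neg h0, add_zero] at hodd_tail
        have hexp : k + 1 - (oddCount β + 1) / 2 =
            1 + (k - (oddCount (Fin.tail β) + 1) / 2) := by
          omega
        refine (mul_le_mul (abs_sum_pow_le hw _) (ih _) (abs_nonneg _) (by positivity)).trans_eq ?_
        rw [hM, hexp, hsum]
        ring
    have merged_le : ∀ j,
        |distinctMonomialSum w (update (Fin.tail β) j (Fin.tail β j + β 0))| ≤ M := by
      intro j
      have hodd_update := oddCount_le_update (Fin.tail β) j (Fin.tail β j + β 0)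
      have : oddCount β ≤ oddCount (Fin.tail β) + 1 := by split_ifs at hodd_tail <;> omega
      refine (ih _).trans ?_
      rw [sum_update_add, add_comm, ← hsum, hM]
      exact mul_le_mul_of_nonneg_left (pow_le_pow_right₀ hN (by omega)) (by positivity)
    calc |distinctMonomialSum w β| ≤ _ := abs_distinctMonomialSum_succ_le w β
      _ ≤ M + ∑ _j : Fin k, M := add_le_add head_le (sum_le_sum fun j _ => merged_le j)
      _ = _ := by
          simp only [sum_const, card_univ, Fintype.card_fin, nsmul_eq_mul, Nat.factorial_succ, hM]
          push_cast
          ring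

end DistinctMonomialSum

theorem MulAction.card_nsmul_sum_smul {G X M : Type*} [Group G] [Fintype G] [MulAction G X]
    [Fintype X] [MulAction.IsPretransitive G X] [AddCommMonoid M] (f : X → M) (x : X) :
    Fintype.card X • ∑ g : G, f (g • x) = Fintype.card G • ∑ y, f y := by
  have orbit_sum : ∀ y : X, ∑ g : G, f (g • y) = ∑ g : G, f (g • x) := by
    intro y
    obtain ⟨h, rfl⟩ := MulAction.exists_smul_eq G x y
    exact Fintype.sum_equiv (Equiv.mulRight h) _ _ fun g => by simp [mul_smul]
  calc Fintype.card X • ∑ g : G, f (g • x) = ∑ y : X, ∑ g : G, f (g • y) := by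
        simp [orbit_sum]
    _ = ∑ g : G, ∑ y, f (g • y) := sum_comm
    _ = ∑ _g : G, ∑ y, f y := by
        congr! 1 with g
        exact Fintype.sum_bijective _ (MulAction.bijective g) _ _ fun _ => rfl
    _ = Fintype.card G • ∑ y, f y := by simp

theorem integral_permMeasure {n : ℕ} (f : Equiv.Perm (Fin n) → ℝ) :
    ∫ σ, f σ ∂permMeasure n = (∑ σ, f σ) / n ! := by
  rw [permMeasure, PMF.integral_eq_sum, sum_div]
  simp [PMF.uniformOfFintype_apply, Fintype.card_perm, div_eq_inv_mul]

theorem integral_comp_smul_embedding {m n : ℕ} (l : Fin m ↪ Fin n) (F : (Fin m ↪ Fin n) → ℝ) :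
    ∫ σ, F (σ • l) ∂permMeasure n = (∑ q, F q) / n.descFactorial m := by
  have := Equiv.Perm.isMultiplyPretransitive (Fin n) m
  have hcard := MulAction.card_nsmul_sum_smul (G := Equiv.Perm (Fin n)) F l
  have hdesc : 0 < n.descFactorial m := by
    simpa [Fintype.card_embedding_eq] using Fintype.card_pos_iff.mpr ⟨l⟩
  rw [Fintype.card_embedding_eq, Fintype.card_perm, Fintype.card_fin, Fintype.card_fin,
    nsmul_eq_mul, nsmul_eq_mul] at hcard
  rw [integral_permMeasure, div_eq_div_iff (by positivity) (by positivity)]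
  linear_combination hcard

def normalizedRank (n : ℕ) (q : Fin n) : ℝ :=
  Real.sqrt (12 / ((n : ℝ) ^ 2 - 1)) * (((q : ℕ) : ℝ) + 1 - ((n : ℝ) + 1) / 2)

theorem normalizedRank_rev {n : ℕ} (q : Fin n) :
    normalizedRank n q.rev = -normalizedRank n q := by
  have hq := q.isLt
  simp only [normalizedRank, Fin.val_rev, Nat.cast_sub (by omega : (q : ℕ) + 1 ≤ n)]
  push_cast
  ring

theorem sum_normalizedRank_pow_of_odd (n : ℕ) {b : ℕ} (hb : Odd b) :
    ∑ q, normalizedRank n q ^ b = 0 := by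
  have h : ∑ q, normalizedRank n q ^ b = -∑ q, normalizedRank n q ^ b := by
    rw [← sum_neg_distrib, ← Equiv.sum_comp Fin.revPerm]
    simp [normalizedRank_rev, hb.neg_pow]
  linarith

theorem abs_normalizedRank_le {n : ℕ} (q : Fin n) : |normalizedRank n q| ≤ √3 := by
  have hq := q.isLt
  have hN : (0 : ℝ) ≤ (n : ℝ) ^ 2 - 1 := by
    have : (1 : ℝ) ≤ n := by exact_mod_cast Nat.zero_lt_of_lt hq
    nlinarith
  have hq' : ((q : ℕ) : ℝ) + 1 ≤ n := by exact_mod_cast hq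
  have hcentered : (((q : ℕ) : ℝ) + 1 - ((n : ℝ) + 1) / 2) ^ 2 ≤ ((n : ℝ) ^ 2 - 1) / 4 := by
    nlinarith [mul_nonneg ((q : ℕ).cast_nonneg (α := ℝ)) (sub_nonneg.2 hq')]
  apply Real.abs_le_sqrt
  -- `n = 1` is allowed: then `12 / 0 = 0` and the rank is `0`.
  calc normalizedRank n q ^ 2
        = 12 / ((n : ℝ) ^ 2 - 1) * (((q : ℕ) : ℝ) + 1 - ((n : ℝ) + 1) / 2) ^ 2 := by
        rw [normalizedRank, mul_pow, Real.sq_sqrt (by positivity)]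
    _ ≤ 12 / ((n : ℝ) ^ 2 - 1) * (((n : ℝ) ^ 2 - 1) / 4) := by gcongr
    _ = 3 * (((n : ℝ) ^ 2 - 1) / ((n : ℝ) ^ 2 - 1)) := by ring
    _ ≤ 3 := by linarith [div_self_le_one ((n : ℝ) ^ 2 - 1)]

theorem integral_prod_Zr_pow {m n : ℕ} {l : Fin m → Fin n} (hl : Injective l) (α : Fin m → ℕ) :
    ∫ σ, ∏ i, Zr n (l i) σ ^ α i ∂permMeasure n =
      distinctMonomialSum (normalizedRank n) α / n.descFactorial m :=
  integral_comp_smul_embedding ⟨l, hl⟩ fun q => ∏ i, normalizedRank n (q i) ^ α i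

theorem pow_le_pow_mul_descFactorial {m n : ℕ} (hm : 0 < m) (hmn : m ≤ n) :
    n ^ m ≤ m ^ m * n.descFactorial m :=
  calc n ^ m ≤ (m * (n + 1 - m)) ^ m := by
        gcongr
        obtain ⟨d, rfl⟩ := exists_add_of_le hmn
        rw [show m + d + 1 - m = d + 1 by omega]
        nlinarith
    _ = m ^ m * (n + 1 - m) ^ m := mul_pow _ _ _
    _ ≤ m ^ m * n.descFactorial m := Nat.mul_le_mul_left _ (Nat.pow_sub_le_descFactorial n m)

theorem pow_sub_div_descFactorial_le {m n t : ℕ} {s : ℝ} (hm : 0 < m) (hmn : m ≤ n) (ht : t ≤ m)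
    (hs : s ≤ t) : (n : ℝ) ^ (m - t) / n.descFactorial m ≤ m ^ m * (n : ℝ) ^ (-s) := by
  have hn : (1 : ℝ) ≤ n := by exact_mod_cast hm.trans_le hmn
  have hdesc : (0 : ℝ) < n.descFactorial m := by exact_mod_cast Nat.descFactorial_pos.mpr hmn
  have hpow : (n : ℝ) ^ m ≤ m ^ m * n.descFactorial m := by
    exact_mod_cast pow_le_pow_mul_descFactorial hm hmn
  calc (n : ℝ) ^ (m - t) / n.descFactorial m
        = (n : ℝ) ^ m / n.descFactorial m * (n : ℝ) ^ (-(t : ℝ)) := by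
        rw [pow_sub₀ _ (by positivity) ht, Real.rpow_neg (by positivity), Real.rpow_natCast]
        ring
    _ ≤ m ^ m * (n : ℝ) ^ (-s) := by
        gcongr
        rwa [div_le_iff₀ hdesc]

theorem spearman_even_moment_bound_general (m : ℕ) (hm : 0 < m) (α : Fin m → ℕ) :
    ∃ C : ℝ, ∀ n : ℕ, m ≤ n → ∀ l : Fin m → Fin n, Function.Injective l →
      |∫ σ, ∏ i, (Zr n (l i) σ) ^ (α i) ∂(permMeasure n)| ≤
        C * (n : ℝ) ^
          (-(((Finset.univ.filter fun i => Odd (α i)).card : ℝ) / 2)) := by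
  refine ⟨√3 ^ (∑ i, α i) * m ! * m ^ m, fun n hmn l hl => ?_⟩
  have : Nonempty (Fin n) := ⟨⟨0, hm.trans_le hmn⟩⟩
  have hmonomial := abs_distinctMonomialSum_le abs_normalizedRank_le
    (fun _ hb => sum_normalizedRank_pow_of_odd n hb) α
  rw [Fintype.card_fin] at hmonomial
  have hodd_le := oddCount_le α
  have hrate := pow_sub_div_descFactorial_le (n := n) (t := (oddCount α + 1) / 2)
    (s := (oddCount α : ℝ) / 2) hm hmn (by omega) (by
      rw [div_le_iff₀ two_pos]
      exact_mod_cast (by omega : oddCount α ≤ (oddCount α + 1) / 2 * 2))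
  rw [integral_prod_Zr_pow hl, abs_div, Nat.abs_cast]
  calc _ ≤ √3 ^ (∑ i, α i) * m ! * (n : ℝ) ^ (m - (oddCount α + 1) / 2) / n.descFactorial m := by
        gcongr
    _ = √3 ^ (∑ i, α i) * m ! * ((n : ℝ) ^ (m - (oddCount α + 1) / 2) / n.descFactorial m) :=
        mul_div_assoc _ _ _
    _ ≤ √3 ^ (∑ i, α i) * m ! * (m ^ m * (n : ℝ) ^ (-((oddCount α : ℝ) / 2))) := by gcongr
    _ = _ := (mul_assoc _ _ _).symm

/-- If `α_1 + ⋯ + α_m` is even, then there is a constant `C` (depending only on `m` and `α`)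
such that for all `n ≥ m` and mutually distinct indices `l_1,…,l_m`,
`|E[Z_{l_1}^{α_1} ⋯ Z_{l_m}^{α_m}]| ≤ C·n^{−𝔫_o(α)/2}`, where `𝔫_o(α)` is the number of odd
exponents. -/
theorem spearman_even_moment_bound (m : ℕ) (hm : 0 < m) (α : Fin m → ℕ)
    (hα : ∀ i, 0 < α i) (heven : Even (∑ i, α i)) :
    ∃ C : ℝ, ∀ n : ℕ, m ≤ n → ∀ l : Fin m → Fin n, Function.Injective l →
      |∫ σ, ∏ i, (Zr n (l i) σ) ^ (α i) ∂(permMeasure n)| ≤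
        C * (n : ℝ) ^
          (-(((Finset.univ.filter fun i => Odd (α i)).card : ℝ) / 2)) :=
  spearman_even_moment_bound_general m hm α
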